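/- arXiv:1808.04140 — 8 statements merged into one kernel-verified Lean document; each statement's English description precedes it below -/
import Mathlib

section
/- Let g : ℝ≥0 → ℝ≥0 be continuously differentiable and γ, β : ℝ≥0 → ℝ⁺ continuous with g'(t) ≤ -γ(t)g(t) + β(t). If ∫₀^∞ γ(t)dt = ∞ and lim_{t→∞} β(t)/γ(t) = 0, then lim_{t→∞} g(t) = 0. -/
open Real Filter

/-- If `g' ≤ -γ g + β`, `∫₀^∞ γ = ∞` and `β/γ → 0`, then `g → 0`. -/
theorem gronwall_tendsto_zero
    (g g' γ β : ℝ → ℝ)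
    (hg0 : ∀ t ≥ (0:ℝ), 0 ≤ g t)
    (hderiv : ∀ t ≥ (0:ℝ), HasDerivAt g (g' t) t)
    (hg'cont : Continuous g')
    (hγcont : Continuous γ) (hγpos : ∀ t ≥ (0:ℝ), 0 < γ t)
    (hβcont : Continuous β) (hβpos : ∀ t ≥ (0:ℝ), 0 < β t)
    (hineq : ∀ t ≥ (0:ℝ), g' t ≤ -γ t * g t + β t)
    (hγdiv : Tendsto (fun t => ∫ s in (0:ℝ)..t, γ s) atTop atTop)
    (hratio : Tendsto (fun t => β t / γ t) atTop (nhds 0)) :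
    Tendsto g atTop (nhds 0) := by
  rw [Metric.tendsto_atTop]
  intro ε hε
  have hε2 : (0:ℝ) < ε / 2 := by positivity
  -- eventually β t / γ t < ε/2
  have h1 : ∀ᶠ t in atTop, β t / γ t < ε / 2 :=
    hratio.eventually (gt_mem_nhds hε2)
  obtain ⟨T₀, hT₀⟩ := (h1.and (eventually_ge_atTop (0:ℝ))).exists_forall_of_atTop
  set T : ℝ := max T₀ 0 with hT
  have hTnn : (0:ℝ) ≤ T := le_max_right _ _
  have hbound : ∀ t ≥ T, β t < ε / 2 * γ t := by
    intro t ht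
    have h0t : (0:ℝ) ≤ t := le_trans hTnn ht
    have := (hT₀ t (le_trans (le_max_left _ _) ht)).1
    have hγt := hγpos t h0t
    calc β t = β t / γ t * γ t := by field_simp
    _ < ε / 2 * γ t := by
        exact mul_lt_mul_of_pos_right this hγt
  -- the integral Γ
  set Γ : ℝ → ℝ := fun t => ∫ s in T..t, γ s with hΓdef
  have hΓderiv : ∀ t : ℝ, HasDerivAt Γ (γ t) t := by
    intro t
    exact intervalIntegral.integral_hasDerivAt_right
      (hγcont.intervalIntegrable _ _)
      (hγcont.stronglyMeasurableAtFilter _ _)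
      hγcont.continuousAt
  -- F = (g - ε/2) * exp Γ is antitone on [T, ∞)
  set F : ℝ → ℝ := fun t => (g t - ε / 2) * Real.exp (Γ t) with hFdef
  have hFderiv : ∀ t ≥ (0:ℝ),
      HasDerivAt F (g' t * Real.exp (Γ t) + (g t - ε / 2) * (Real.exp (Γ t) * γ t)) t := by
    intro t ht
    exact ((hderiv t ht).sub_const _).mul ((hΓderiv t).exp)
  have hFanti : AntitoneOn F (Set.Ici T) := by
    apply antitoneOn_of_deriv_nonpos (convex_Ici T)
    · intro t ht
      exact (hFderiv t (le_trans hTnn ht)).continuousAt.continuousWithinAt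
    · intro t ht
      rw [interior_Ici] at ht
      exact ((hFderiv t (le_trans hTnn (le_of_lt ht))).differentiableAt).differentiableWithinAt
    · intro t ht
      rw [interior_Ici] at ht
      have h0t : (0:ℝ) ≤ t := le_trans hTnn (le_of_lt ht)
      rw [(hFderiv t h0t).deriv]
      have h1 := hineq t h0t
      have h2 := hbound t (le_of_lt ht)
      have hexp : (0:ℝ) < Real.exp (Γ t) := Real.exp_pos _
      have : g' t + (g t - ε / 2) * γ t ≤ 0 := by nlinarith
      nlinarith
  have hΓ0 : Γ T = 0 := intervalIntegral.integral_same
  -- Γ → ∞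
  have hΓtop : Tendsto Γ atTop atTop := by
    have heq : ∀ t : ℝ, Γ t = (∫ s in (0:ℝ)..t, γ s) - ∫ s in (0:ℝ)..T, γ s := by
      intro t
      exact (intervalIntegral.integral_interval_sub_left
        (hγcont.intervalIntegrable 0 t) (hγcont.intervalIntegrable 0 T)).symm
    have := tendsto_atTop_add_const_right atTop (-(∫ s in (0:ℝ)..T, γ s)) hγdiv
    refine this.congr fun t => ?_
    rw [← sub_eq_add_neg, ← heq t]
  have hexp0 : Tendsto (fun t => |g T - ε / 2| * Real.exp (-Γ t)) atTop (nhds 0) := by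
    have := (Real.tendsto_exp_neg_atTop_nhds_zero.comp hΓtop).const_mul (|g T - ε / 2|)
    simpa using this
  have h2 : ∀ᶠ t in atTop, |g T - ε / 2| * Real.exp (-Γ t) < ε / 2 :=
    hexp0.eventually (gt_mem_nhds hε2)
  obtain ⟨T₁, hT₁⟩ := (h2.and (eventually_ge_atTop T)).exists_forall_of_atTop
  refine ⟨T₁, fun t ht => ?_⟩
  obtain ⟨hsmall, htT⟩ := hT₁ t ht
  have h0t : (0:ℝ) ≤ t := le_trans hTnn htT
  have hFle : F t ≤ F T := hFanti (Set.self_mem_Ici) htT htT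
  have hexp : (0:ℝ) < Real.exp (Γ t) := Real.exp_pos _
  have hFT : F T = g T - ε / 2 := by simp [hFdef, hΓ0]
  -- g t - ε/2 ≤ (g T - ε/2) * exp(-Γ t)
  have key : g t - ε / 2 ≤ (g T - ε / 2) * Real.exp (-Γ t) := by
    have : (g t - ε / 2) * Real.exp (Γ t) ≤ g T - ε / 2 := by rw [← hFT]; exact hFle
    rw [Real.exp_neg, ← div_eq_mul_inv, le_div_iff₀ hexp]
    linarith
  have hge : g t ≥ 0 := hg0 t h0t
  have habs : (g T - ε / 2) * Real.exp (-Γ t) ≤ |g T - ε / 2| * Real.exp (-Γ t) :=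
    mul_le_mul_of_nonneg_right (le_abs_self _) (le_of_lt (Real.exp_pos _))
  rw [Real.dist_eq, sub_zero, abs_of_nonneg hge]
  linarith
end

section
/- Let g : ℝ≥0 → ℝ≥0 be continuously differentiable and γ, β : ℝ≥0 → ℝ⁺ continuous with g'(t) ≤ -γ(t)g(t) + β(t). If ∫₀^∞ γ(t)dt = ∞ and limsup_{t→∞} β(t)/γ(t) < ∞, then g is bounded on [0,∞). -/
open Real Filter

/-- If `g' ≤ -γ g + β`, `∫₀^∞ γ = ∞` and `limsup β/γ < ∞`, then `g` is bounded
on `[0, ∞)`. -/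
theorem gronwall_bounded
    (g g' γ β : ℝ → ℝ)
    (hg0 : ∀ t ≥ (0:ℝ), 0 ≤ g t)
    (hderiv : ∀ t ≥ (0:ℝ), HasDerivAt g (g' t) t)
    (hg'cont : Continuous g')
    (hγcont : Continuous γ) (hγpos : ∀ t ≥ (0:ℝ), 0 < γ t)
    (hβcont : Continuous β) (hβpos : ∀ t ≥ (0:ℝ), 0 < β t)
    (hineq : ∀ t ≥ (0:ℝ), g' t ≤ -γ t * g t + β t)
    (hγdiv : Tendsto (fun t => ∫ s in (0:ℝ)..t, γ s) atTop atTop)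
    (hlimsup : ∃ B : ℝ, ∀ᶠ t in atTop, β t / γ t ≤ B) :
    ∃ M : ℝ, ∀ t ≥ (0:ℝ), g t ≤ M := by
  obtain ⟨B, hB⟩ := hlimsup
  rw [eventually_atTop] at hB
  obtain ⟨T₀, hT₀⟩ := hB
  set T : ℝ := max T₀ 0 with hT
  have hT0 : (0:ℝ) ≤ T := le_max_right _ _
  -- bound on [0, T]
  have hgcont : ContinuousOn g (Set.Icc 0 T) := fun x hx =>
    ((hderiv x hx.1).continuousAt).continuousWithinAt
  obtain ⟨M₁, hM₁⟩ := isCompact_Icc.bddAbove_image hgcont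
  set M₀ : ℝ := max (g T) B + 1 with hM₀
  refine ⟨max M₁ M₀, fun t ht => ?_⟩
  rcases le_total t T with h | h
  · exact le_trans (hM₁ (Set.mem_image_of_mem g ⟨ht, h⟩)) (le_max_left _ _)
  · -- apply fencing theorem on [T, t] with constant boundary M₀
    have key : ∀ ⦃x⦄, x ∈ Set.Icc T t → g x ≤ M₀ := by
      refine image_le_of_deriv_right_lt_deriv_boundary (f' := g')
        (B := fun _ => M₀) (B' := fun _ => 0)
        (fun x hx => ((hderiv x (hT0.trans hx.1)).continuousAt).continuousWithinAt)
        (fun x hx => ((hderiv x (hT0.trans hx.1)).hasDerivWithinAt))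
        (le_trans (le_trans (le_max_left _ _) (le_add_of_nonneg_right zero_le_one)) le_rfl)
        (fun x => hasDerivAt_const _ _) ?_
      intro x hx hgx
      have hx0 : (0:ℝ) ≤ x := hT0.trans hx.1
      have hγx := hγpos x hx0
      have hβγ : β x ≤ B * γ x := by
        have := hT₀ x (le_trans (le_max_left T₀ 0) hx.1)
        rw [div_le_iff₀ hγx] at this
        linarith
      have h1 : g' x ≤ -γ x * g x + β x := hineq x hx0
      have h2 : -γ x * g x + β x ≤ γ x * (B - M₀) := by
        rw [hgx]
        have hB' : B ≤ max (g T) B := le_max_right _ _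
        nlinarith
      have h3 : γ x * (B - M₀) < 0 := by
        have : B - M₀ < 0 := by
          have : B ≤ max (g T) B := le_max_right _ _
          simp only [hM₀]; linarith
        exact mul_neg_of_pos_of_neg hγx this
      calc g' x ≤ γ x * (B - M₀) := h1.trans h2
        _ < 0 := h3
    exact le_trans (key ⟨h, le_rfl⟩) (le_max_right _ _)
end

section
/- Let Φ : ℝ≥0 → ℝ≥0 and α : ℝ≥0 → ℝ⁺ be continuous, and suppose there exist constants C₁, C₂ > 0 and β ∈ (0,1) such that for all integers k ≥ 0 and all t ∈ [kC₁, (k+1)C₁]: (i) Φ(t) ≤ Φ(kC₁) + C₂∫_{kC₁}^{(k+1)C₁} α(s)ds and (ii) Φ((k+1)C₁) ≤ β·Φ(kC₁) + C₂∫_{kC₁}^{(k+1)C₁} α(s)ds. If α is bounded and ∫₀^∞ α²(t)dt < ∞, then ∫₀^∞ α(t)Φ(t)dt < ∞. -/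
open Real Filter MeasureTheory

/-!
Sample on the grid `kC₁`. Cauchy–Schwarz on each block turns `∫ α² < ∞` into square summability
of the block integrals `aₖ` of `α`. The contraction `Φ((k+1)C₁) ≤ β Φ(kC₁) + C₂ aₖ` then makes the
grid values `Φ(kC₁)` square summable as well, since a contraction driven by an `ℓ²` input has `ℓ²`
output. On a block, `Φ ≤ Φ(kC₁) + C₂ aₖ`, so the block integral of `αΦ` is at most
`aₖ Φ(kC₁) + C₂ aₖ²`, which is summable; for a nonnegative continuous integrand this is
integrability on `[0, ∞)`.
-/

theorem sq_intervalIntegral_le {f : ℝ → ℝ} {c d : ℝ} (hcd : c < d)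
    (hf : IntervalIntegrable f volume c d)
    (hf2 : IntervalIntegrable (fun s => f s ^ 2) volume c d) :
    (∫ s in c..d, f s) ^ 2 ≤ (d - c) * ∫ s in c..d, f s ^ 2 := by
  have hμ : volume.real (Set.Ioc c d) = d - c := Real.volume_real_Ioc_of_le hcd.le
  have hjensen := (even_two.convexOn_pow (𝕜 := ℝ)).map_set_average_le
    (continuous_pow 2).continuousOn isClosed_univ (by simp [hcd]) (by simp) (by simp) hf.1 hf2.1
  simp only [setAverage_eq, hμ, smul_eq_mul] at hjensen
  rw [mul_pow, inv_pow, inv_mul_le_iff₀ (by positivity)] at hjensen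
  rw [intervalIntegral.integral_of_le hcd.le, intervalIntegral.integral_of_le hcd.le]
  calc _ ≤ _ := hjensen
    _ = _ := by field_simp

theorem sq_mul_add_le {β : ℝ} (hβ0 : 0 ≤ β) (hβ1 : β < 1) (x y : ℝ) :
    (β * x + y) ^ 2 ≤ β * x ^ 2 + y ^ 2 / (1 - β) := by
  have hβ : 0 < 1 - β := sub_pos.2 hβ1
  -- convexity of `t ↦ t²` at `β x + (1 - β) (y / (1 - β))`, with an explicit gap
  have hgap : β * x ^ 2 + y ^ 2 / (1 - β) - (β * x + y) ^ 2
      = β * (1 - β) * (x - y / (1 - β)) ^ 2 := by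
    field_simp
    ring
  linarith [mul_nonneg (mul_nonneg hβ0 hβ.le) (sq_nonneg (x - y / (1 - β)))]

theorem summable_sq_of_le_mul_add {p c : ℕ → ℝ} {β : ℝ} (hβ0 : 0 ≤ β) (hβ1 : β < 1)
    (hp : ∀ k, 0 ≤ p k) (hrec : ∀ k, p (k + 1) ≤ β * p k + c k)
    (hc : Summable fun k => c k ^ 2) :
    Summable fun k => p k ^ 2 := by
  have hβ : 0 < 1 - β := sub_pos.2 hβ1
  set M := ∑' k, c k ^ 2
  have hstep : ∀ k, p (k + 1) ^ 2 ≤ β * p k ^ 2 + c k ^ 2 / (1 - β) := fun k =>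
    (pow_le_pow_left₀ (hp (k + 1)) (hrec k) 2).trans (sq_mul_add_le hβ0 hβ1 _ _)
  set B := (p 0 ^ 2 + M / (1 - β)) / (1 - β)
  have hmono :
      ∀ n, ∑ k ∈ Finset.range n, p k ^ 2 ≤ ∑ k ∈ Finset.range (n + 1), p k ^ 2 :=
    fun n => by rw [Finset.sum_range_succ]; exact le_add_of_nonneg_right (sq_nonneg _)
  have hpartial : ∀ n, ∑ k ∈ Finset.range (n + 1), p k ^ 2 ≤ B := by
    intro n
    have hshift : ∑ k ∈ Finset.range n, p (k + 1) ^ 2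
        ≤ β * ∑ k ∈ Finset.range n, p k ^ 2 + M / (1 - β) := by
      calc ∑ k ∈ Finset.range n, p (k + 1) ^ 2
          ≤ ∑ k ∈ Finset.range n, (β * p k ^ 2 + c k ^ 2 / (1 - β)) :=
            Finset.sum_le_sum fun k _ => hstep k
        _ = β * ∑ k ∈ Finset.range n, p k ^ 2
              + (∑ k ∈ Finset.range n, c k ^ 2) / (1 - β) := by
            rw [Finset.sum_add_distrib, Finset.mul_sum, Finset.sum_div]
        _ ≤ β * ∑ k ∈ Finset.range n, p k ^ 2 + M / (1 - β) := by
            gcongr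
            exact hc.sum_le_tsum _ fun k _ => sq_nonneg _
    rw [le_div_iff₀ hβ]
    nlinarith [Finset.sum_range_succ' (fun k => p k ^ 2) n, hmono n]
  exact summable_of_sum_range_le (c := B) (fun k => sq_nonneg _) fun n =>
    (hmono n).trans (hpartial n)

noncomputable def blockIntegral (C : ℝ) (f : ℝ → ℝ) (k : ℕ) : ℝ :=
  ∫ s in (k : ℝ) * C..((k : ℝ) + 1) * C, f s

section blockIntegral

variable {f : ℝ → ℝ} {C : ℝ}

theorem sum_range_blockIntegral (hf : Continuous f) (n : ℕ) :
    ∑ k ∈ Finset.range n, blockIntegral C f k = ∫ s in 0..(n : ℝ) * C, f s := by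
  simpa [blockIntegral] using intervalIntegral.sum_integral_adjacent_intervals
    (a := fun k : ℕ => (k : ℝ) * C) (μ := volume) (n := n) fun k _ => hf.intervalIntegrable _ _

theorem blockIntegral_nonneg (hC : 0 ≤ C) (hf0 : ∀ t ≥ 0, 0 ≤ f t) (k : ℕ) :
    0 ≤ blockIntegral C f k :=
  intervalIntegral.integral_nonneg (by gcongr; linarith)
    fun _ hu => hf0 _ ((by positivity : (0 : ℝ) ≤ k * C).trans hu.1)

theorem integrableOn_Ici_iff_summable_blockIntegral (hC : 0 < C) (hf : Continuous f)
    (hf0 : ∀ t ≥ 0, 0 ≤ f t) :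
    IntegrableOn f (Set.Ici 0) ↔ Summable (blockIntegral C f) := by
  have hpartial :
      ∀ n : ℕ, ∫ s in 0..(n : ℝ) * C, f s = ∫ s in Set.Ioc 0 ((n : ℝ) * C), f s :=
    fun n => intervalIntegral.integral_of_le (by positivity)
  constructor
  · intro hint
    refine summable_of_sum_range_le (c := ∫ s in Set.Ici 0, f s) (blockIntegral_nonneg hC.le hf0)
      fun n => ?_
    rw [sum_range_blockIntegral hf, hpartial]
    exact setIntegral_mono_set hint ((ae_restrict_mem measurableSet_Ici).mono hf0)
      (Eventually.of_forall fun _ hs => le_of_lt hs.1)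
  · intro hsum
    rw [integrableOn_Ici_iff_integrableOn_Ioi]
    refine integrableOn_Ioi_of_intervalIntegral_norm_bounded (∑' k, blockIntegral C f k) 0
      (fun n : ℕ => hf.integrableOn_Icc.mono_set Set.Ioc_subset_Icc_self)
      (tendsto_natCast_atTop_atTop.atTop_mul_const hC) (Eventually.of_forall fun n => ?_)
    have hnorm : ∫ s in 0..(n : ℝ) * C, ‖f s‖ = ∫ s in 0..(n : ℝ) * C, f s :=
      intervalIntegral.integral_congr fun s hs =>
        norm_of_nonneg (hf0 s (Set.uIcc_of_le (by positivity : (0 : ℝ) ≤ n * C) ▸ hs).1)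
    rw [hnorm, ← sum_range_blockIntegral hf]
    exact hsum.sum_le_tsum _ fun k _ => blockIntegral_nonneg hC.le hf0 k

theorem sq_blockIntegral_le (hC : 0 < C) (hf : Continuous f) (k : ℕ) :
    blockIntegral C f k ^ 2 ≤ C * blockIntegral C (fun s => f s ^ 2) k := by
  have hlt : (k : ℝ) * C < ((k : ℝ) + 1) * C := by gcongr; linarith
  have := sq_intervalIntegral_le hlt (hf.intervalIntegrable _ _)
    ((hf.pow 2).intervalIntegrable _ _)
  rwa [show ((k : ℝ) + 1) * C - k * C = C by ring] at this

theorem blockIntegral_mul_le {g : ℝ → ℝ} {M : ℝ} (hC : 0 ≤ C) (hf : Continuous f)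
    (hg : Continuous g) (k : ℕ)
    (hf0 : ∀ t ∈ Set.Icc ((k : ℝ) * C) (((k : ℝ) + 1) * C), 0 ≤ f t)
    (hgM : ∀ t ∈ Set.Icc ((k : ℝ) * C) (((k : ℝ) + 1) * C), g t ≤ M) :
    blockIntegral C (fun s => f s * g s) k ≤ blockIntegral C f k * M := by
  rw [blockIntegral, blockIntegral, ← intervalIntegral.integral_mul_const]
  exact intervalIntegral.integral_mono_on (by gcongr; linarith)
    ((hf.mul hg).intervalIntegrable _ _) ((hf.mul continuous_const).intervalIntegrable _ _)
    fun t ht => mul_le_mul_of_nonneg_left (hgM t ht) (hf0 t ht)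

end blockIntegral

theorem weighted_disagreement_integrable_general
    (Φ α : ℝ → ℝ)
    (hΦcont : Continuous Φ) (hΦnonneg : ∀ t ≥ (0:ℝ), 0 ≤ Φ t)
    (hαcont : Continuous α) (hαpos : ∀ t ≥ (0:ℝ), 0 < α t)
    (C₁ C₂ β : ℝ) (hC₁ : 0 < C₁) (hβ : β ∈ Set.Ioo (0:ℝ) 1)
    (hrec1 : ∀ k : ℕ, ∀ t ∈ Set.Icc ((k:ℝ) * C₁) (((k:ℝ) + 1) * C₁),
      Φ t ≤ Φ ((k:ℝ) * C₁) + C₂ * ∫ s in ((k:ℝ) * C₁)..(((k:ℝ) + 1) * C₁), α s)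
    (hrec2 : ∀ k : ℕ,
      Φ (((k:ℝ) + 1) * C₁) ≤ β * Φ ((k:ℝ) * C₁) +
        C₂ * ∫ s in ((k:ℝ) * C₁)..(((k:ℝ) + 1) * C₁), α s)
    (hα2int : IntegrableOn (fun t => (α t) ^ 2) (Set.Ici (0:ℝ))) :
    IntegrableOn (fun t => α t * Φ t) (Set.Ici (0:ℝ)) := by
  set a := blockIntegral C₁ α
  set p : ℕ → ℝ := fun k => Φ ((k : ℝ) * C₁)
  have hgrid : ∀ k : ℕ, ∀ t ∈ Set.Icc ((k:ℝ) * C₁) (((k:ℝ) + 1) * C₁), 0 ≤ t :=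
    fun k t ht => (by positivity : (0:ℝ) ≤ k * C₁).trans ht.1
  have hα0 : ∀ t ≥ (0:ℝ), 0 ≤ α t := fun t ht => (hαpos t ht).le
  have hαΦ0 : ∀ t ≥ (0:ℝ), 0 ≤ α t * Φ t := fun t ht =>
    mul_nonneg (hα0 t ht) (hΦnonneg t ht)
  have ha2 : Summable fun k => a k ^ 2 :=
    .of_nonneg_of_le (fun k => sq_nonneg _) (sq_blockIntegral_le hC₁ hαcont)
      (((integrableOn_Ici_iff_summable_blockIntegral hC₁ (hαcont.pow 2)
        fun t _ => sq_nonneg (α t)).1 hα2int).mul_left C₁)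
  have hcontract : ∀ k, p (k + 1) ≤ β * p k + C₂ * a k := by
    simpa [p, a, blockIntegral, Nat.cast_succ] using hrec2
  have hp2 : Summable fun k => p k ^ 2 :=
    summable_sq_of_le_mul_add hβ.1.le hβ.2 (fun k => hΦnonneg _ (by positivity)) hcontract
      (by simpa only [mul_pow] using ha2.mul_left (C₂ ^ 2))
  have hblock : ∀ k, blockIntegral C₁ (fun t => α t * Φ t) k ≤ a k * (p k + C₂ * a k) :=
    fun k => blockIntegral_mul_le hC₁.le hαcont hΦcont k
      (fun t ht => hα0 t (hgrid k t ht)) (hrec1 k)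
  have hamgm : ∀ k, a k * (p k + C₂ * a k) ≤ (p k ^ 2 + a k ^ 2) / 2 + C₂ * a k ^ 2 :=
    fun k => by nlinarith [sq_nonneg (p k - a k)]
  refine (integrableOn_Ici_iff_summable_blockIntegral (f := fun t => α t * Φ t) hC₁
    (hαcont.mul hΦcont) hαΦ0).2 ?_
  exact .of_nonneg_of_le (blockIntegral_nonneg hC₁.le hαΦ0)
    (fun k => (hblock k).trans (hamgm k)) (((hp2.add ha2).div_const 2).add (ha2.mul_left C₂))

/-- Summability of the weighted disagreement: if `Φ` satisfies the two
recursive contraction inequalities and `α` is bounded and square integrable,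
then `∫₀^∞ α Φ < ∞`. -/
theorem weighted_disagreement_integrable
    (Φ α : ℝ → ℝ)
    (hΦcont : Continuous Φ) (hΦnonneg : ∀ t ≥ (0:ℝ), 0 ≤ Φ t)
    (hαcont : Continuous α) (hαpos : ∀ t ≥ (0:ℝ), 0 < α t)
    (C₁ C₂ β : ℝ) (hC₁ : 0 < C₁) (hC₂ : 0 < C₂) (hβ : β ∈ Set.Ioo (0:ℝ) 1)
    (hrec1 : ∀ k : ℕ, ∀ t ∈ Set.Icc ((k:ℝ) * C₁) (((k:ℝ) + 1) * C₁),
      Φ t ≤ Φ ((k:ℝ) * C₁) + C₂ * ∫ s in ((k:ℝ) * C₁)..(((k:ℝ) + 1) * C₁), α s)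
    (hrec2 : ∀ k : ℕ,
      Φ (((k:ℝ) + 1) * C₁) ≤ β * Φ ((k:ℝ) * C₁) +
        C₂ * ∫ s in ((k:ℝ) * C₁)..(((k:ℝ) + 1) * C₁), α s)
    (hαbdd : ∃ A : ℝ, ∀ t ≥ (0:ℝ), α t ≤ A)
    (hα2int : IntegrableOn (fun t => (α t) ^ 2) (Set.Ici (0:ℝ))) :
    IntegrableOn (fun t => α t * Φ t) (Set.Ici (0:ℝ)) :=
  weighted_disagreement_integrable_general Φ α hΦcont hΦnonneg hαcont hαpos C₁ C₂ β hC₁ hβ hrec1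
    hrec2 hα2int
end

section
/- Let L be the graph Laplacian of a connected undirected weighted graph on N nodes (with positive edge weights), let h₁,…,h_N ∈ ℝ^m span ℝ^m, and define H̃ = diag(h₁h₁ᵀ, …, h_N h_Nᵀ) ∈ ℝ^{Nm×Nm}. Then the matrix P = L⊗I_m + H̃ is positive definite. -/
open Matrix Finset
open scoped Kronecker

/-!
For `x = (x₁, …, x_N)` with `xᵢ ∈ ℝ^m`, the quadratic form of `P` is
`½ ∑ₐ ∑ᵢⱼ wᵢⱼ (x_{i,a} - x_{j,a})² + ∑ᵢ (hᵢ ⬝ xᵢ)²`, a sum of squares with nonnegative weights.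
If it vanishes, the first part forces `xᵢ = xⱼ` across every edge, so by connectivity all `xᵢ`
equal one vector `c`; the second part then says `hᵢ ⬝ c = 0` for every `i`, and since the `hᵢ`
span `ℝ^m` this gives `c = 0`.
-/

variable {ι κ R : Type*}

namespace Matrix

def weightedLaplacian [Fintype ι] [DecidableEq ι] [AddCommGroup R] (w : Matrix ι ι R) :
    Matrix ι ι R :=
  diagonal (fun i ↦ ∑ j, w i j) - w

/-- `diag(h₁h₁ᵀ, …, h_N h_Nᵀ)`, indexed with the block index first, unlike `Matrix.blockDiagonal`,
to match the indexing of `L ⊗ₖ 1`. -/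
def blockDiagonalOuter [DecidableEq ι] [Mul R] [Zero R] (h : ι → κ → R) :
    Matrix (ι × κ) (ι × κ) R :=
  of fun p q ↦ if p.1 = q.1 then h p.1 p.2 * h p.1 q.2 else 0

theorem IsSymm.weightedLaplacian [Fintype ι] [DecidableEq ι] [AddCommGroup R]
    {w : Matrix ι ι R} (hw : w.IsSymm) : (weightedLaplacian w).IsSymm :=
  (isSymm_diagonal _).sub hw

theorem isSymm_blockDiagonalOuter [DecidableEq ι] [CommMagma R] [Zero R] (h : ι → κ → R) :
    (blockDiagonalOuter h).IsSymm := by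
  ext p q
  by_cases hpq : p.1 = q.1
  · simp [blockDiagonalOuter, hpq, mul_comm]
  · simp [blockDiagonalOuter, hpq, Ne.symm hpq]

theorem IsSymm.kronecker [Mul R] {A : Matrix ι ι R} {B : Matrix κ κ R} (hA : A.IsSymm)
    (hB : B.IsSymm) : (A ⊗ₖ B).IsSymm := by
  rw [IsSymm, ← kroneckerMap_transpose, hA.eq, hB.eq]

theorem dotProduct_kronecker_one_mulVec [Fintype ι] [Fintype κ] [DecidableEq κ] [CommSemiring R]
    (A : Matrix ι ι R) (x : ι × κ → R) :
    x ⬝ᵥ ((A ⊗ₖ (1 : Matrix κ κ R)) *ᵥ x) = ∑ a, (fun i ↦ x (i, a)) ⬝ᵥ (A *ᵥ fun i ↦ x (i, a)) := by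
  simp only [dotProduct, mulVec, kroneckerMap_apply, one_apply, mul_ite, mul_one, mul_zero, ite_mul,
    zero_mul, Fintype.sum_prod_type, sum_ite_eq, mem_univ, ↓reduceIte, mul_sum]
  exact sum_comm

theorem dotProduct_blockDiagonalOuter_mulVec [Fintype ι] [Fintype κ] [DecidableEq ι]
    [CommSemiring R] (h : ι → κ → R) (x : ι × κ → R) :
    x ⬝ᵥ (blockDiagonalOuter h *ᵥ x) = ∑ i, (h i ⬝ᵥ Function.curry x i) ^ 2 := by
  simp only [dotProduct, mulVec, blockDiagonalOuter, of_apply, ite_mul, zero_mul,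
    Fintype.sum_prod_type, sum_ite_irrel, sum_const_zero, sum_ite_eq, mem_univ, ↓reduceIte,
    mul_sum, Function.curry_apply, sq, sum_mul]
  exact sum_congr rfl fun i _ ↦ sum_congr rfl fun a _ ↦ sum_congr rfl fun b _ ↦ by ring

theorem two_mul_dotProduct_weightedLaplacian_mulVec [Fintype ι] [DecidableEq ι] [CommRing R]
    {w : Matrix ι ι R} (hw : w.IsSymm) (s : ι → R) :
    2 * (s ⬝ᵥ (weightedLaplacian w *ᵥ s)) = ∑ i, ∑ j, w i j * (s i - s j) ^ 2 := by
  have hquad : s ⬝ᵥ (weightedLaplacian w *ᵥ s) =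
      ∑ i, ∑ j, w i j * s i ^ 2 - ∑ i, ∑ j, w i j * (s i * s j) := by
    rw [weightedLaplacian, sub_mulVec, dotProduct_sub]
    simp only [dotProduct, mulVec_diagonal]
    simp only [mulVec, dotProduct, mul_sum, sum_mul]
    congr 1 <;> exact sum_congr rfl fun i _ ↦ sum_congr rfl fun j _ ↦ by ring
  have hexpand : ∑ i, ∑ j, w i j * (s i - s j) ^ 2 = ∑ i, ∑ j, w i j * s i ^ 2
      - 2 * ∑ i, ∑ j, w i j * (s i * s j) + ∑ i, ∑ j, w i j * s j ^ 2 := by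
    simp only [mul_sum, ← sum_sub_distrib, ← sum_add_distrib]
    exact sum_congr rfl fun i _ ↦ sum_congr rfl fun j _ ↦ by ring
  have hswap : ∑ i, ∑ j, w i j * s j ^ 2 = ∑ i, ∑ j, w i j * s i ^ 2 := by
    rw [sum_comm]
    simp_rw [hw.apply]
  rw [hquad, hexpand, hswap]
  ring

section Ordered

variable [Fintype ι] [DecidableEq ι] [CommRing R] [LinearOrder R] [IsStrictOrderedRing R]
  {w : Matrix ι ι R}

theorem dotProduct_weightedLaplacian_mulVec_nonneg (hw : w.IsSymm) (hw₀ : ∀ i j, 0 ≤ w i j)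
    (s : ι → R) : 0 ≤ s ⬝ᵥ (weightedLaplacian w *ᵥ s) := by
  refine (mul_nonneg_iff_of_pos_left (zero_lt_two' R)).1 ?_
  rw [two_mul_dotProduct_weightedLaplacian_mulVec hw]
  exact sum_nonneg fun i _ ↦ sum_nonneg fun j _ ↦ mul_nonneg (hw₀ i j) (sq_nonneg _)

theorem eq_of_dotProduct_weightedLaplacian_mulVec_eq_zero (hw : w.IsSymm)
    (hw₀ : ∀ i j, 0 ≤ w i j) {s : ι → R} (hs : s ⬝ᵥ (weightedLaplacian w *ᵥ s) = 0) {i j : ι}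
    (hij : 0 < w i j) : s i = s j := by
  have hterm_nonneg : ∀ i j, 0 ≤ w i j * (s i - s j) ^ 2 := fun i j ↦
    mul_nonneg (hw₀ i j) (sq_nonneg _)
  have hsum : ∑ i, ∑ j, w i j * (s i - s j) ^ 2 = 0 := by
    rw [← two_mul_dotProduct_weightedLaplacian_mulVec hw, hs, mul_zero]
  have hrow := (sum_eq_zero_iff_of_nonneg fun i _ ↦
    sum_nonneg fun j _ ↦ hterm_nonneg i j).1 hsum i (mem_univ i)
  have hterm := (sum_eq_zero_iff_of_nonneg fun j _ ↦ hterm_nonneg i j).1 hrow j (mem_univ j)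
  rwa [mul_eq_zero, or_iff_right hij.ne', sq_eq_zero_iff, sub_eq_zero] at hterm

end Ordered

theorem eq_zero_of_forall_dotProduct_eq_zero [Fintype κ] [DecidableEq κ] [CommSemiring R]
    {h : ι → κ → R} (hspan : Submodule.span R (Set.range h) = ⊤) {c : κ → R}
    (hc : ∀ i, h i ⬝ᵥ c = 0) : c = 0 := by
  have : dotProductEquiv R κ c = 0 :=
    LinearMap.ext_on_range hspan fun i ↦ by simpa [dotProduct_comm] using hc i
  simpa using this

end Matrix

theorem SimpleGraph.Reachable.eq_of_forall_adj {V α : Type*} {G : SimpleGraph V} {f : V → α}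
    (hf : ∀ u v, G.Adj u v → f u = f v) {u v : V} (h : G.Reachable u v) : f u = f v := by
  obtain ⟨p⟩ := h
  induction p with
  | nil => rfl
  | cons hadj _ ih => exact (hf _ _ hadj).trans ih

/-- If `L` is the Laplacian of a connected undirected weighted graph on `N`
nodes and the vectors `h₁, …, h_N` span `ℝ^m`, then
`P = L ⊗ I_m + diag(h₁h₁ᵀ, …, h_N h_Nᵀ)` is positive definite. -/
theorem laplacian_plus_blockdiag_posDef
    (N m : ℕ)
    (w : Fin N → Fin N → ℝ)
    (hsymm : ∀ i j, w i j = w j i)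
    (hnonneg : ∀ i j, 0 ≤ w i j)
    (hdiag : ∀ i, w i i = 0)
    (G : SimpleGraph (Fin N))
    (hG : ∀ i j, G.Adj i j ↔ i ≠ j ∧ 0 < w i j)
    (hconn : G.Connected)
    (L : Matrix (Fin N) (Fin N) ℝ)
    (hL : ∀ i j, L i j = if i = j then ∑ k, w i k else -(w i j))
    (h : Fin N → (Fin m → ℝ))
    (hspan : Submodule.span ℝ (Set.range h) = ⊤)
    (Htilde : Matrix (Fin N × Fin m) (Fin N × Fin m) ℝ)
    (hHtilde : ∀ p q, Htilde p q = if p.1 = q.1 then h p.1 p.2 * h p.1 q.2 else 0) :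
    (L ⊗ₖ (1 : Matrix (Fin m) (Fin m) ℝ) + Htilde).PosDef := by
  have hw : (of w).IsSymm := IsSymm.ext fun i j ↦ hsymm j i
  obtain rfl : L = weightedLaplacian (of w) := by
    ext i j
    by_cases hij : i = j
    · subst hij; simp [hL, weightedLaplacian, hdiag]
    · simp [hL, weightedLaplacian, hij]
  obtain rfl : Htilde = blockDiagonalOuter h := ext hHtilde
  refine posDef_iff_dotProduct_mulVec.2 ⟨isHermitian_iff_isSymm.2
    ((hw.weightedLaplacian.kronecker isSymm_one).add (isSymm_blockDiagonalOuter h)), fun x hx ↦ ?_⟩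
  rw [star_trivial, add_mulVec, dotProduct_add, dotProduct_kronecker_one_mulVec,
    dotProduct_blockDiagonalOuter_mulVec]
  have hlap (a : Fin m) := dotProduct_weightedLaplacian_mulVec_nonneg hw hnonneg fun i ↦ x (i, a)
  refine (add_nonneg (sum_nonneg fun a _ ↦ hlap a) (sum_nonneg fun i _ ↦ sq_nonneg _)).lt_of_ne'
    fun hzero ↦ hx ?_
  obtain ⟨hlap₀, hblock₀⟩ := (add_eq_zero_iff_of_nonneg (sum_nonneg fun a _ ↦ hlap a)
    (sum_nonneg fun i _ ↦ sq_nonneg _)).1 hzero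
  have hconst (i j : Fin N) : Function.curry x i = Function.curry x j :=
    (hconn.preconnected i j).eq_of_forall_adj fun u v huv ↦ funext fun a ↦
      eq_of_dotProduct_weightedLaplacian_mulVec_eq_zero hw hnonneg
        ((sum_eq_zero_iff_of_nonneg fun a _ ↦ hlap a).1 hlap₀ a (mem_univ a)) ((hG u v).1 huv).2
  have horth (i j : Fin N) : h j ⬝ᵥ Function.curry x i = 0 := by
    rw [hconst i j]
    exact pow_eq_zero_iff two_ne_zero |>.1 <|
      (sum_eq_zero_iff_of_nonneg fun i _ ↦ sq_nonneg _).1 hblock₀ j (mem_univ j)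
  funext ⟨i, a⟩
  exact congr_fun (eq_zero_of_forall_dotProduct_eq_zero hspan (horth i)) a
end

section
/- Under the distributed flow ẋ_i = K Σ_j A_{ij}(x_j - x_i) - α(t)(h_i h_iᵀ x_i - z_i h_i) over a fixed connected graph, with rank(H) = m, ∫₀^∞ α = ∞, and α(t) → 0, every solution satisfies lim_{t→∞} x_i(t) = y* = (HᵀH)⁻¹Hᵀz for all nodes i. -/
/-!
Write `e i = x i - y*` and `r i = h iᵀ y* - z i`. The energy `W = ∑ ‖e i‖²` satisfies
`W' = -K D(e) - 2α (S(e) + X(e))`, where `D` is the Dirichlet energy of the weighted graph,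
`S(e) = ∑ (h iᵀ e i)²` and `X(e) = ∑ r i h iᵀ e i`. Connectivity and `rank H = m` make `D + S`
positive definite, and the normal equations `∑ r i h i = 0` make `X` vanish on consensus vectors,
so that `X² ≤ C D`. Hence `W' ≤ -λ α W + C' α²` once `α ≤ K/2`, and `W → 0` because
`∫ α = ∞` while `α → 0`.
-/

open Matrix Filter
open scoped Topology

theorem dotProduct_self_nonneg {n : Type*} [Fintype n] (v : n → ℝ) : 0 ≤ v ⬝ᵥ v :=
  Fintype.sum_nonneg fun _ => mul_self_nonneg _

theorem norm_le_sqrt_dotProduct_self {n : Type*} [Fintype n] (v : n → ℝ) : ‖v‖ ≤ √(v ⬝ᵥ v) :=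
  (pi_norm_le_iff_of_nonneg (Real.sqrt_nonneg _)).2 fun a => by
    rw [Real.norm_eq_abs]
    exact Real.abs_le_sqrt <| by
      simpa [sq, dotProduct] using
        Finset.single_le_sum (fun b _ => mul_self_nonneg (v b)) (Finset.mem_univ a)

theorem HasDerivAt.dotProduct {𝕜 n : Type*} [NontriviallyNormedField 𝕜] [Fintype n]
    {f g : 𝕜 → n → 𝕜} {f' g' : n → 𝕜} {t : 𝕜} (hf : HasDerivAt f f' t) (hg : HasDerivAt g g' t) :
    HasDerivAt (fun s => f s ⬝ᵥ g s) (f' ⬝ᵥ g t + f t ⬝ᵥ g') t :=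
  (HasDerivAt.fun_sum (u := Finset.univ)
    fun a _ => (hasDerivAt_pi.1 hf a).fun_mul (hasDerivAt_pi.1 hg a)).congr_deriv
    Finset.sum_add_distrib

theorem tendsto_of_tendsto_sum_dotProduct_self_sub {ι κ β : Type*} [Fintype ι] [Fintype κ]
    {l : Filter β} {x : β → ι → κ → ℝ} {y : κ → ℝ}
    (h : Tendsto (fun t => ∑ i, (x t i - y) ⬝ᵥ (x t i - y)) l (𝓝 0)) (i : ι) :
    Tendsto (fun t => x t i) l (𝓝 y) := by
  rw [tendsto_iff_norm_sub_tendsto_zero]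
  refine squeeze_zero (fun _ => norm_nonneg _) (fun t => (norm_le_sqrt_dotProduct_self _).trans ?_)
    (by simpa only [Real.sqrt_zero] using h.sqrt)
  exact Real.sqrt_le_sqrt <| Finset.single_le_sum (fun j _ => dotProduct_self_nonneg (x t j - y))
    (Finset.mem_univ i)

theorem exists_pos_mul_le_of_sq_homogeneous {E : Type*} [NormedAddCommGroup E] [NormedSpace ℝ E]
    [FiniteDimensional ℝ E] {Q R : E → ℝ} (hQ : Continuous Q) (hR : Continuous R)
    (hQsmul : ∀ (c : ℝ) v, Q (c • v) = c ^ 2 * Q v) (hRsmul : ∀ (c : ℝ) v, R (c • v) = c ^ 2 * R v)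
    (hQpos : ∀ v ≠ 0, 0 < Q v) : ∃ c > 0, ∀ v, c * R v ≤ Q v := by
  have hzero {F : E → ℝ} (hF : ∀ (c : ℝ) v, F (c • v) = c ^ 2 * F v) : F 0 = 0 := by
    simpa using hF 0 0
  suffices ∃ c > 0, ∀ w ∈ Metric.sphere (0 : E) 1, c * R w ≤ Q w by
    obtain ⟨c, hc, hsphere⟩ := this
    refine ⟨c, hc, fun v => ?_⟩
    rcases eq_or_ne v 0 with rfl | hv
    · simp [hzero hQsmul, hzero hRsmul]
    have hnorm : ‖v‖ ≠ 0 := norm_ne_zero_iff.2 hv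
    have hw := hsphere (‖v‖⁻¹ • v) (by simp [norm_smul, hnorm])
    have hv' : v = ‖v‖ • (‖v‖⁻¹ • v) := by rw [smul_smul, mul_inv_cancel₀ hnorm, one_smul]
    rw [hv', hQsmul, hRsmul]
    nlinarith [sq_nonneg ‖v‖]
  rcases subsingleton_or_nontrivial E with hE | hE
  · exact ⟨1, one_pos, fun w _ => by simp [Subsingleton.elim w 0, hzero hQsmul, hzero hRsmul]⟩
  have hne : (Metric.sphere (0 : E) 1).Nonempty := NormedSpace.sphere_nonempty.2 zero_le_one
  obtain ⟨w₀, hw₀, hmin⟩ := (isCompact_sphere (0 : E) 1).exists_isMinOn hne hQ.continuousOn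
  obtain ⟨w₁, -, hmax⟩ := (isCompact_sphere (0 : E) 1).exists_isMaxOn hne hR.continuousOn
  have hq : 0 < Q w₀ := hQpos w₀ (ne_zero_of_mem_unit_sphere ⟨w₀, hw₀⟩)
  refine ⟨Q w₀ / (|R w₁| + 1), by positivity, fun w hw => ?_⟩
  have hRw : R w ≤ |R w₁| + 1 := (hmax hw).trans (by linarith [le_abs_self (R w₁)])
  calc Q w₀ / (|R w₁| + 1) * R w ≤ Q w₀ / (|R w₁| + 1) * (|R w₁| + 1) := by gcongr
    _ = Q w₀ := div_mul_cancel₀ _ (by positivity)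
    _ ≤ Q w := hmin hw

theorem eventually_lt_of_hasDerivAt_le {W W' α Φ : ℝ → ℝ} {μ C ε : ℝ} (hμ : 0 < μ) (hε : 0 < ε)
    (hΦ : ∀ᶠ t in atTop, HasDerivAt Φ (α t) t) (hΦtop : Tendsto Φ atTop atTop)
    (hα0 : Tendsto α atTop (𝓝 0)) (hα : ∀ᶠ t in atTop, 0 ≤ α t)
    (hW : ∀ᶠ t in atTop, HasDerivAt W (W' t) t ∧ W' t ≤ -μ * α t * W t + C * α t ^ 2) :
    ∀ᶠ t in atTop, W t < ε := by
  have hCα : ∀ᶠ t in atTop, C * α t < μ * ε / 2 := by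
    refine (hα0.const_mul C).eventually_lt_const ?_
    rw [mul_zero]; positivity
  obtain ⟨T, hT⟩ := eventually_atTop.1 (hΦ.and (hα.and (hW.and hCα)))
  -- `g` is antitone on `[T, ∞)` because `(W - ε/2)' ≤ -μ α (W - ε/2)` there.
  set g : ℝ → ℝ := fun t => (W t - ε / 2) * Real.exp (μ * Φ t)
  have hg : ∀ t ≥ T, HasDerivAt g
      (W' t * Real.exp (μ * Φ t) + (W t - ε / 2) * (Real.exp (μ * Φ t) * (μ * α t))) t :=
    fun t ht => by
      obtain ⟨hΦt, -, ⟨hWt, -⟩, -⟩ := hT t ht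
      exact (hWt.sub_const _).mul (hΦt.const_mul μ).exp
  have hanti : AntitoneOn g (Set.Ici T) := by
    refine antitoneOn_of_hasDerivWithinAt_nonpos (convex_Ici T)
      (fun t ht => (hg t ht).continuousAt.continuousWithinAt)
      (fun t ht => (hg t (interior_subset ht)).hasDerivWithinAt) fun t ht => ?_
    obtain ⟨-, hαt, ⟨-, hWt⟩, hCαt⟩ := hT t (interior_subset ht)
    have hexp := Real.exp_pos (μ * Φ t)
    have : W' t + (W t - ε / 2) * (μ * α t) ≤ 0 := by nlinarith
    nlinarith
  have htail : Tendsto (fun t => g T * Real.exp (-(μ * Φ t))) atTop (𝓝 0) := by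
    simpa using (Real.tendsto_exp_atBot.comp
      (tendsto_neg_atTop_atBot.comp (hΦtop.const_mul_atTop hμ))).const_mul (g T)
  filter_upwards [htail.eventually_lt_const (half_pos hε), eventually_ge_atTop T] with t hlt ht
  have hgt : g t ≤ g T := hanti Set.self_mem_Ici ht ht
  have : W t - ε / 2 ≤ g T * Real.exp (-(μ * Φ t)) := by
    rw [Real.exp_neg, ← div_eq_mul_inv, le_div_iff₀ (Real.exp_pos _)]
    exact hgt
  linarith

theorem tendsto_zero_of_hasDerivAt_le {W W' α Φ : ℝ → ℝ} {μ C : ℝ} (hμ : 0 < μ)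
    (hΦ : ∀ᶠ t in atTop, HasDerivAt Φ (α t) t) (hΦtop : Tendsto Φ atTop atTop)
    (hα0 : Tendsto α atTop (𝓝 0)) (hα : ∀ᶠ t in atTop, 0 ≤ α t)
    (hW0 : ∀ᶠ t in atTop, 0 ≤ W t)
    (hW : ∀ᶠ t in atTop, HasDerivAt W (W' t) t ∧ W' t ≤ -μ * α t * W t + C * α t ^ 2) :
    Tendsto W atTop (𝓝 0) :=
  tendsto_order.2 ⟨fun _ hε => hW0.mono fun _ h => hε.trans_le h,
    fun _ hε => eventually_lt_of_hasDerivAt_le hμ hε hΦ hΦtop hα0 hα hW⟩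

theorem Matrix.mulVec_injective_of_rank_eq_card {ι κ K : Type*} [Fintype κ] [Field K]
    {H : Matrix ι κ K} (hH : H.rank = Fintype.card κ) : Function.Injective H.mulVec := by
  have hnull := LinearMap.finrank_range_add_finrank_ker H.mulVecLin
  rw [← Matrix.rank, hH, Module.finrank_fintype_fun_eq_card] at hnull
  have hker : Module.finrank K (LinearMap.ker H.mulVecLin) = 0 := by omega
  exact LinearMap.ker_eq_bot.1 (Submodule.finrank_eq_zero.1 hker)

theorem sum_residual_smul_row_eq_zero {ι κ : Type*} [Fintype ι] [Fintype κ] [DecidableEq κ]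
    {H : Matrix ι κ ℝ} (hH : Function.Injective H.mulVec) (z : ι → ℝ) :
    ∑ i, (H i ⬝ᵥ (Hᵀ * H)⁻¹ *ᵥ (Hᵀ *ᵥ z) - z i) • H i = 0 := by
  have hgram : IsUnit (Hᵀ * H) := by
    refine mulVec_injective_iff_isUnit.1 ((LinearMap.ker_eq_bot (f := (Hᵀ * H).mulVecLin)).1 ?_)
    rw [ker_mulVecLin_transpose_mul_self]
    exact LinearMap.ker_eq_bot.2 hH
  have hsolve : (Hᵀ * H) *ᵥ ((Hᵀ * H)⁻¹ *ᵥ (Hᵀ *ᵥ z)) = Hᵀ *ᵥ z := by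
    rw [mulVec_mulVec, mul_nonsing_inv _ ((isUnit_iff_isUnit_det _).1 hgram), one_mulVec]
  rw [← vecMul_eq_sum, ← mulVec_transpose]
  have : (fun i => H i ⬝ᵥ (Hᵀ * H)⁻¹ *ᵥ (Hᵀ *ᵥ z) - z i) = H *ᵥ ((Hᵀ * H)⁻¹ *ᵥ (Hᵀ *ᵥ z)) - z := rfl
  rw [this, mulVec_sub, mulVec_mulVec, hsolve, sub_self]

section DirichletEnergy

variable {ι κ : Type*} [Fintype ι] [Fintype κ] (A : Matrix ι ι ℝ)

def dirichletEnergy (e : ι → κ → ℝ) : ℝ :=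
  ∑ i, ∑ j, A i j * ((e i - e j) ⬝ᵥ (e i - e j))

variable {A}

theorem dirichletEnergy_nonneg (hA : ∀ i j, 0 ≤ A i j) (e : ι → κ → ℝ) :
    0 ≤ dirichletEnergy A e :=
  Fintype.sum_nonneg fun i => Fintype.sum_nonneg fun j =>
    mul_nonneg (hA i j) (dotProduct_self_nonneg _)

variable (A)

theorem continuous_dirichletEnergy : Continuous (dirichletEnergy A : (ι → κ → ℝ) → ℝ) := by
  unfold dirichletEnergy
  fun_prop

theorem dirichletEnergy_smul (c : ℝ) (e : ι → κ → ℝ) :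
    dirichletEnergy A (c • e) = c ^ 2 * dirichletEnergy A e := by
  simp only [dirichletEnergy, Finset.mul_sum, Pi.smul_apply, ← smul_sub, smul_dotProduct,
    dotProduct_smul, smul_eq_mul]
  exact Finset.sum_congr rfl fun i _ => Finset.sum_congr rfl fun j _ => by ring

theorem dirichletEnergy_sub_const (e : ι → κ → ℝ) (u : κ → ℝ) :
    dirichletEnergy A (fun i => e i - u) = dirichletEnergy A e := by
  simp [dirichletEnergy]

theorem two_mul_sum_dotProduct_laplacian (hA : ∀ i j, A i j = A j i) (e : ι → κ → ℝ) :
    2 * ∑ i, e i ⬝ᵥ ∑ j, A i j • (e j - e i) = -dirichletEnergy A e := by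
  have hswap : ∑ i, ∑ j, A i j * (e i ⬝ᵥ (e j - e i)) =
      ∑ i, ∑ j, A i j * (e j ⬝ᵥ (e i - e j)) := by
    rw [Finset.sum_comm]
    simp_rw [hA]
  simp only [dotProduct_sum, dotProduct_smul, smul_eq_mul, dirichletEnergy]
  rw [two_mul]
  nth_rewrite 2 [hswap]
  rw [← Finset.sum_add_distrib, ← Finset.sum_neg_distrib]
  refine Finset.sum_congr rfl fun i _ => ?_
  rw [← Finset.sum_add_distrib, ← Finset.sum_neg_distrib]
  refine Finset.sum_congr rfl fun j _ => ?_
  simp only [dotProduct_sub, sub_dotProduct, dotProduct_comm (e j) (e i)]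
  ring

variable {A}

theorem eq_of_dirichletEnergy_eq_zero (hA : ∀ i j, 0 ≤ A i j) {G : SimpleGraph ι}
    (hGA : ∀ i j, G.Adj i j → 0 < A i j) (hconn : G.Connected) {e : ι → κ → ℝ}
    (he : dirichletEnergy A e = 0) (i j : ι) : e i = e j := by
  have hterm_nonneg : ∀ i j, 0 ≤ A i j * ((e i - e j) ⬝ᵥ (e i - e j)) := fun i j =>
    mul_nonneg (hA i j) (dotProduct_self_nonneg _)
  have hterm : ∀ i j, A i j * ((e i - e j) ⬝ᵥ (e i - e j)) = 0 := fun i j =>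
    congrFun ((Fintype.sum_eq_zero_iff_of_nonneg (hterm_nonneg i)).1 <| congrFun
      ((Fintype.sum_eq_zero_iff_of_nonneg fun i => Fintype.sum_nonneg (hterm_nonneg i)).1 he) i) j
  have hadj : ∀ i j, G.Adj i j → e i = e j := fun i j hij =>
    sub_eq_zero.1 <| dotProduct_self_eq_zero.1 <|
      (mul_eq_zero.1 (hterm i j)).resolve_left (hGA i j hij).ne'
  obtain ⟨w⟩ := hconn.preconnected i j
  induction w with
  | nil => rfl
  | cons hstep _ ih => exact (hadj _ _ hstep).trans ih

theorem two_mul_sum_dotProduct_flow (hA : ∀ i j, A i j = A j i) (H : Matrix ι κ ℝ) (z : ι → ℝ)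
    (x : ι → κ → ℝ) (y : κ → ℝ) (K a : ℝ) :
    2 * ∑ i, (x i - y) ⬝ᵥ (K • ∑ j, A i j • (x j - x i) - a • ((H i ⬝ᵥ x i) • H i - z i • H i)) =
      -(K * dirichletEnergy A (fun i => x i - y) + 2 * a *
        (∑ i, (H i ⬝ᵥ (x i - y)) ^ 2 + ∑ i, ((H i ⬝ᵥ y - z i) • H i) ⬝ᵥ (x i - y))) := by
  have hlap := two_mul_sum_dotProduct_laplacian A hA (fun i => x i - y)
  simp only [sub_sub_sub_cancel_right] at hlap
  have hdata : ∀ i, (x i - y) ⬝ᵥ ((H i ⬝ᵥ x i) • H i - z i • H i) =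
      (H i ⬝ᵥ (x i - y)) ^ 2 + ((H i ⬝ᵥ y - z i) • H i) ⬝ᵥ (x i - y) := fun i => by
    simp only [dotProduct_sub, sub_dotProduct, dotProduct_smul, smul_dotProduct, smul_eq_mul,
      dotProduct_comm (x i) (H i), dotProduct_comm y (H i)]
    ring
  simp only [dotProduct_sub, dotProduct_smul, smul_eq_mul, Finset.sum_sub_distrib, hdata,
    Finset.sum_add_distrib, ← Finset.mul_sum] at hlap ⊢
  linear_combination K * hlap

theorem exists_pos_mul_sum_le_dirichletEnergy_add (hA : ∀ i j, 0 ≤ A i j) {G : SimpleGraph ι}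
    (hGA : ∀ i j, G.Adj i j → 0 < A i j) (hconn : G.Connected) {H : Matrix ι κ ℝ}
    (hH : Function.Injective H.mulVec) :
    ∃ c > 0, ∀ e : ι → κ → ℝ,
      c * ∑ i, e i ⬝ᵥ e i ≤ dirichletEnergy A e + ∑ i, (H i ⬝ᵥ e i) ^ 2 := by
  have hpos : ∀ e : ι → κ → ℝ, e ≠ 0 → 0 < dirichletEnergy A e + ∑ i, (H i ⬝ᵥ e i) ^ 2 := by
    intro e he
    by_contra! hle
    have hS : 0 ≤ ∑ i, (H i ⬝ᵥ e i) ^ 2 := by positivity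
    have hD := dirichletEnergy_nonneg hA e
    have hcons := eq_of_dirichletEnergy_eq_zero hA hGA hconn (by linarith : dirichletEnergy A e = 0)
    have hS0 : ∑ i, (H i ⬝ᵥ e i) ^ 2 = 0 := by linarith
    have hrow : ∀ j, H j ⬝ᵥ e j = 0 := fun j => pow_eq_zero_iff two_ne_zero |>.1 <| congrFun
      ((Fintype.sum_eq_zero_iff_of_nonneg fun i => sq_nonneg _).1 hS0) j
    refine he (funext fun i => hH ?_)
    ext j
    simp only [Pi.zero_apply, mulVec_zero]
    exact (congrArg (H j ⬝ᵥ ·) (hcons i j)).trans (hrow j)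
  refine exists_pos_mul_le_of_sq_homogeneous ((continuous_dirichletEnergy A).add (by fun_prop))
    (by fun_prop) (fun c e => ?_) (fun c e => ?_) hpos
  · simp only [dirichletEnergy_smul, Pi.smul_apply, dotProduct_smul, smul_eq_mul, mul_pow,
      ← Finset.mul_sum, mul_add]
  · simp only [Pi.smul_apply, dotProduct_smul, smul_dotProduct, smul_eq_mul, ← Finset.mul_sum]
    ring

theorem exists_pos_mul_sq_le_dirichletEnergy (hA : ∀ i j, 0 ≤ A i j) {G : SimpleGraph ι}
    (hGA : ∀ i j, G.Adj i j → 0 < A i j) (hconn : G.Connected) {b : ι → κ → ℝ}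
    (hb : ∑ i, b i = 0) :
    ∃ c > 0, ∀ e : ι → κ → ℝ, c * (∑ i, b i ⬝ᵥ e i) ^ 2 ≤ dirichletEnergy A e := by
  obtain ⟨i₀⟩ := hconn.nonempty
  have hpos : ∀ e : ι → κ → ℝ, e ≠ 0 → 0 < dirichletEnergy A e + e i₀ ⬝ᵥ e i₀ := by
    intro e he
    by_contra! hle
    have hD := dirichletEnergy_nonneg hA e
    have h₀ := dotProduct_self_nonneg (e i₀)
    have hcons := eq_of_dirichletEnergy_eq_zero hA hGA hconn (by linarith : dirichletEnergy A e = 0)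
    have he₀ : e i₀ = 0 := dotProduct_self_eq_zero.1 (by linarith)
    exact he (funext fun i => (hcons i i₀).trans he₀)
  obtain ⟨c, hc, hle⟩ := exists_pos_mul_le_of_sq_homogeneous
    (Q := fun e : ι → κ → ℝ => dirichletEnergy A e + e i₀ ⬝ᵥ e i₀)
    (R := fun e : ι → κ → ℝ => (∑ i, b i ⬝ᵥ e i) ^ 2)
    ((continuous_dirichletEnergy A).add (by fun_prop)) (by fun_prop)
    (fun c e => by
      simp only [dirichletEnergy_smul, Pi.smul_apply, dotProduct_smul, smul_dotProduct, smul_eq_mul]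
      ring)
    (fun c e => by simp only [Pi.smul_apply, dotProduct_smul, smul_eq_mul, ← Finset.mul_sum]; ring)
    hpos
  -- Shifting by the consensus vector `e i₀` changes neither side.
  refine ⟨c, hc, fun e => ?_⟩
  simpa [dirichletEnergy_sub_const, dotProduct_sub, Finset.sum_sub_distrib, ← sum_dotProduct, hb]
    using hle (fun i => e i - e i₀)

end DirichletEnergy

theorem neg_dissipation_le {K a lam c D S W X : ℝ} (hK : 0 < K) (hc : 0 < c) (ha : 0 ≤ a)
    (haK : 2 * a ≤ K) (hD : 0 ≤ D) (hS : 0 ≤ S) (hW : lam * W ≤ D + S) (hX : c * X ^ 2 ≤ D) :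
    -(K * D + 2 * a * (S + X)) ≤ -lam * a * W + 2 / (c * K) * a ^ 2 := by
  -- Young's inequality: `2 a X ≥ -(K/2) c X² - 2 a² / (c K)`.
  have hyoung : -(K / 2 * (c * X ^ 2)) - 2 / (c * K) * a ^ 2 ≤ 2 * a * X := by
    have : 0 ≤ K * c / 2 * (X + 2 * a / (c * K)) ^ 2 := by positivity
    have hcK : c * K ≠ 0 := by positivity
    field_simp at this ⊢
    nlinarith [this]
  nlinarith [mul_le_mul_of_nonneg_left hX (half_pos hK).le,
    mul_le_mul_of_nonneg_left hW ha, mul_nonneg (sub_nonneg.2 haK) hD, mul_nonneg ha hS]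

theorem flow_converges_to_least_squares_general
    (N m : ℕ)
    (A : Matrix (Fin N) (Fin N) ℝ)
    (hAsymm : ∀ i j, A i j = A j i)
    (hAnonneg : ∀ i j, 0 ≤ A i j)
    (G : SimpleGraph (Fin N))
    (hG : ∀ i j, G.Adj i j ↔ i ≠ j ∧ 0 < A i j)
    (hconn : G.Connected)
    (h : Fin N → (Fin m → ℝ)) (z : Fin N → ℝ)
    (H : Matrix (Fin N) (Fin m) ℝ) (hHrows : ∀ i a, H i a = h i a)
    (hrank : H.rank = m)
    (K : ℝ) (hK : 0 < K)
    (α : ℝ → ℝ) (hαcont : Continuous α) (hαpos : ∀ t ≥ (0:ℝ), 0 < α t)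
    (hαdiv : Tendsto (fun t => ∫ s in (0:ℝ)..t, α s) atTop atTop)
    (hα0 : Tendsto α atTop (nhds 0))
    (x : ℝ → Fin N → (Fin m → ℝ))
    (hx : ∀ i, ∀ t ≥ (0:ℝ), HasDerivAt (fun s => x s i)
      (K • (∑ j, A i j • (x t j - x t i)) -
        α t • ((h i ⬝ᵥ x t i) • h i - z i • h i)) t) :
    ∀ i, Tendsto (fun t => x t i) atTop
      (nhds ((Hᵀ * H)⁻¹.mulVec (Hᵀ.mulVec z))) := by
  have hH : h = H := funext₂ fun i a => (hHrows i a).symm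
  subst h
  have hGA : ∀ i j, G.Adj i j → 0 < A i j := fun i j hij => ((hG i j).1 hij).2
  have hHinj : Function.Injective H.mulVec :=
    mulVec_injective_of_rank_eq_card (by rwa [Fintype.card_fin])
  obtain ⟨lam, hlam, hcoer⟩ := exists_pos_mul_sum_le_dirichletEnergy_add hAnonneg hGA hconn hHinj
  obtain ⟨c, hc, hcross⟩ :=
    exists_pos_mul_sq_le_dirichletEnergy hAnonneg hGA hconn (sum_residual_smul_row_eq_zero hHinj z)
  set y := (Hᵀ * H)⁻¹ *ᵥ (Hᵀ *ᵥ z)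
  refine tendsto_of_tendsto_sum_dotProduct_self_sub <| tendsto_zero_of_hasDerivAt_le
    (W' := fun t => -(K * dirichletEnergy A (fun i => x t i - y) + 2 * α t *
      (∑ i, (H i ⬝ᵥ (x t i - y)) ^ 2 + ∑ i, ((H i ⬝ᵥ y - z i) • H i) ⬝ᵥ (x t i - y))))
    (C := 2 / (c * K)) hlam
    (Eventually.of_forall fun t => (hαcont.integral_hasStrictDerivAt 0 t).hasDerivAt) hαdiv hα0
    ((eventually_ge_atTop 0).mono fun t ht => (hαpos t ht).le)
    (Eventually.of_forall fun t => Finset.sum_nonneg fun i _ => dotProduct_self_nonneg _) ?_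
  filter_upwards [eventually_ge_atTop 0, hα0.eventually_lt_const (half_pos hK)] with t ht hαK
  refine ⟨?_, neg_dissipation_le hK hc (hαpos t ht).le (by linarith)
    (dirichletEnergy_nonneg hAnonneg _) (by positivity) (hcoer _) (hcross _)⟩
  refine (HasDerivAt.fun_sum fun i _ =>
    ((hx i t ht).sub_const y).dotProduct ((hx i t ht).sub_const y)).congr_deriv ?_
  rw [← two_mul_sum_dotProduct_flow hAsymm, Finset.mul_sum]
  exact Finset.sum_congr rfl fun i _ => by rw [dotProduct_comm, two_mul]

/-- Theorem 1 of the paper: over a fixed connected graph, with `rank H = m`,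
`∫₀^∞ α = ∞` and `α(t) → 0`, every solution of the distributed flow converges
at every node to the unique least-squares solution `y* = (HᵀH)⁻¹Hᵀz`. -/
theorem flow_converges_to_least_squares
    (N m : ℕ)
    (A : Matrix (Fin N) (Fin N) ℝ)
    (hAsymm : ∀ i j, A i j = A j i)
    (hAnonneg : ∀ i j, 0 ≤ A i j)
    (hAdiag : ∀ i, A i i = 0)
    (G : SimpleGraph (Fin N))
    (hG : ∀ i j, G.Adj i j ↔ i ≠ j ∧ 0 < A i j)
    (hconn : G.Connected)
    (h : Fin N → (Fin m → ℝ)) (z : Fin N → ℝ)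
    (H : Matrix (Fin N) (Fin m) ℝ) (hHrows : ∀ i a, H i a = h i a)
    (hrank : H.rank = m)
    (K : ℝ) (hK : 0 < K)
    (α : ℝ → ℝ) (hαcont : Continuous α) (hαpos : ∀ t ≥ (0:ℝ), 0 < α t)
    (hαdiv : Tendsto (fun t => ∫ s in (0:ℝ)..t, α s) atTop atTop)
    (hα0 : Tendsto α atTop (nhds 0))
    (x : ℝ → Fin N → (Fin m → ℝ))
    (hx : ∀ i, ∀ t ≥ (0:ℝ), HasDerivAt (fun s => x s i)
      (K • (∑ j, A i j • (x t j - x t i)) -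
        α t • ((h i ⬝ᵥ x t i) • h i - z i • h i)) t) :
    ∀ i, Tendsto (fun t => x t i) atTop
      (nhds ((Hᵀ * H)⁻¹.mulVec (Hᵀ.mulVec z))) :=
  flow_converges_to_least_squares_general N m A hAsymm hAnonneg G hG hconn h z H hHrows hrank K hK α
    hαcont hαpos hαdiv hα0 x hx
end

section
/- Suppose a nonnegative function g : ℝ≥0 → ℝ satisfies g(t) ≤ c₁ e^{-μt} + ∫₀ᵗ e^{-μ(t-s)}·(c₂/s) ds for constants c₁, c₂, μ > 0 and all sufficiently large t, with the integral interpreted from a fixed positive lower limit. Then g(t) = O(1/t). -/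
open Real Filter

lemma sq_div_four_le_exp (x : ℝ) (hx : 0 ≤ x) : x^2/4 ≤ Real.exp x := by
  have h := Real.add_one_le_exp (x/2)
  have h2 : Real.exp (x/2) * Real.exp (x/2) = Real.exp x := by
    rw [← Real.exp_add]; ring_nf
  nlinarith [Real.exp_pos (x/2)]

lemma integral_exp_shift (μ t a b : ℝ) (hμ : μ ≠ 0) :
    ∫ s in a..b, Real.exp (μ*(s-t)) =
      (Real.exp (μ*(b-t)) - Real.exp (μ*(a-t)))/μ := by
  have h : ∀ s ∈ Set.uIcc a b, HasDerivAt (fun u => Real.exp (μ*(u-t))/μ)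
      (Real.exp (μ*(s-t))) s := by
    intro s _
    have h1 : HasDerivAt (fun u : ℝ => μ*(u-t)) μ s := by
      simpa using ((hasDerivAt_id s).sub_const t).const_mul μ
    have h2 := (h1.exp).div_const μ
    simpa [mul_div_assoc, mul_div_cancel_left₀ _ hμ, mul_comm] using h2
  have hcont : IntervalIntegrable (fun s => Real.exp (μ*(s-t)))
      MeasureTheory.volume a b :=
    (Real.continuous_exp.comp (by continuity)).continuousOn.intervalIntegrable
  rw [intervalIntegral.integral_eq_sub_of_hasDerivAt h hcont]
  ring

set_option maxHeartbeats 1000000 in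
/-- If a nonnegative `g` satisfies
`g t ≤ c₁ e^{-μ t} + ∫₁ᵗ e^{-μ(t-s)} (c₂/s) ds` for all large `t`,
then `g(t) = O(1/t)`. -/
theorem exp_convolution_inv_decay
    (g : ℝ → ℝ) (hg : ∀ t ≥ (0:ℝ), 0 ≤ g t)
    (c₁ c₂ μ : ℝ) (hc₁ : 0 < c₁) (hc₂ : 0 < c₂) (hμ : 0 < μ)
    (hbound : ∀ᶠ t in atTop,
      g t ≤ c₁ * Real.exp (-μ * t) +
        ∫ s in (1:ℝ)..t, Real.exp (-μ * (t - s)) * (c₂ / s)) :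
    ∃ c > (0:ℝ), ∃ τ > (0:ℝ), ∀ t ≥ τ, g t ≤ c / t := by
  obtain ⟨T, hT⟩ := eventually_atTop.mp hbound
  refine ⟨c₁/μ + 8*c₂/μ^2 + 2*c₂/μ, by positivity, max 2 T,
    lt_of_lt_of_le (by norm_num) (le_max_left _ _), ?_⟩
  intro t ht
  have ht2 : (2:ℝ) ≤ t := le_trans (le_max_left _ _) ht
  have htT : T ≤ t := le_trans (le_max_right _ _) ht
  have ht0 : (0:ℝ) < t := by linarith
  have hμt : 0 < μ * t := by positivity
  -- exp decay bounds
  have key2 : Real.exp (-μ*t) ≤ 1/(μ*t) := by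
    rw [show -μ*t = -(μ*t) by ring, Real.exp_neg, inv_eq_one_div,
      div_le_div_iff₀ (Real.exp_pos _) hμt]
    nlinarith [Real.add_one_le_exp (μ*t), Real.exp_pos (μ*t)]
  have key1 : Real.exp (-(μ*t/2)) ≤ 16/(μ^2*t^2) := by
    rw [Real.exp_neg]
    have h4 := sq_div_four_le_exp (μ*t/2) (by positivity)
    rw [inv_eq_one_div, div_le_div_iff₀ (Real.exp_pos _) (by positivity)]
    nlinarith [Real.exp_pos (μ*t/2)]
  -- integrability
  set f : ℝ → ℝ := fun s => Real.exp (-μ * (t - s)) * (c₂ / s) with hf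
  have hcontf : ∀ a b : ℝ, 1 ≤ a → a ≤ b →
      IntervalIntegrable f MeasureTheory.volume a b := by
    intro a b ha hab
    apply ContinuousOn.intervalIntegrable
    apply ContinuousOn.mul
    · exact (Real.continuous_exp.comp (by continuity)).continuousOn
    · apply ContinuousOn.div continuousOn_const continuousOn_id
      intro x hx
      rw [Set.uIcc_of_le hab] at hx
      have : (1:ℝ) ≤ x := le_trans ha hx.1
      simp only [id]
      linarith
  have h1t2 : (1:ℝ) ≤ t/2 := by linarith
  have ht2t : t/2 ≤ t := by linarith
  have hsplit : (∫ s in (1:ℝ)..t, f s) =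
      (∫ s in (1:ℝ)..(t/2), f s) + ∫ s in (t/2)..t, f s :=
    (intervalIntegral.integral_add_adjacent_intervals
      (hcontf 1 (t/2) le_rfl h1t2) (hcontf (t/2) t (by linarith) ht2t)).symm
  -- bound on [1, t/2]
  have hb1 : (∫ s in (1:ℝ)..(t/2), f s) ≤ (t/2 - 1) * (Real.exp (-(μ*t/2)) * c₂) := by
    have hmono : ∀ s ∈ Set.Icc (1:ℝ) (t/2), f s ≤ Real.exp (-(μ*t/2)) * c₂ := by
      intro s hs
      have hs1 : (1:ℝ) ≤ s := hs.1
      have hs2 : s ≤ t/2 := hs.2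
      have he : Real.exp (-μ * (t - s)) ≤ Real.exp (-(μ*t/2)) := by
        apply Real.exp_le_exp.mpr
        nlinarith
      have hd : c₂ / s ≤ c₂ := by
        rw [div_le_iff₀ (by linarith)]
        nlinarith
      have h1 : 0 ≤ Real.exp (-μ * (t - s)) := (Real.exp_pos _).le
      have h2 : 0 < c₂ / s := by positivity
      calc f s ≤ Real.exp (-(μ*t/2)) * (c₂ / s) := by
                  exact mul_le_mul_of_nonneg_right he h2.le
        _ ≤ Real.exp (-(μ*t/2)) * c₂ :=
                  mul_le_mul_of_nonneg_left hd (Real.exp_pos _).le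
    calc (∫ s in (1:ℝ)..(t/2), f s)
        ≤ ∫ _ in (1:ℝ)..(t/2), Real.exp (-(μ*t/2)) * c₂ :=
          intervalIntegral.integral_mono_on h1t2 (hcontf 1 (t/2) le_rfl h1t2)
            intervalIntegrable_const hmono
      _ = (t/2 - 1) * (Real.exp (-(μ*t/2)) * c₂) := by
          rw [intervalIntegral.integral_const]; simp [smul_eq_mul]
  -- bound on [t/2, t]
  have hb2 : (∫ s in (t/2)..t, f s) ≤ 2*c₂/(μ*t) := by
    have hmono : ∀ s ∈ Set.Icc (t/2) t, f s ≤ Real.exp (μ*(s-t)) * (2*c₂/t) := by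
      intro s hs
      have hs1 : t/2 ≤ s := hs.1
      have hs0 : 0 < s := by linarith
      have he : Real.exp (-μ * (t - s)) = Real.exp (μ*(s-t)) := by ring_nf
      have hd : c₂ / s ≤ 2*c₂/t := by
        rw [div_le_div_iff₀ hs0 ht0]
        nlinarith
      rw [hf]
      simp only
      rw [he]
      exact mul_le_mul_of_nonneg_left hd (Real.exp_pos _).le
    have hint : IntervalIntegrable (fun s => Real.exp (μ*(s-t)) * (2*c₂/t))
        MeasureTheory.volume (t/2) t :=
      (((Real.continuous_exp.comp (by continuity)).mul continuous_const)).continuousOn.intervalIntegrable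
    calc (∫ s in (t/2)..t, f s)
        ≤ ∫ s in (t/2)..t, Real.exp (μ*(s-t)) * (2*c₂/t) :=
          intervalIntegral.integral_mono_on ht2t (hcontf (t/2) t (by linarith) ht2t)
            hint hmono
      _ = ((Real.exp (μ*(t-t)) - Real.exp (μ*(t/2-t)))/μ) * (2*c₂/t) := by
          rw [intervalIntegral.integral_mul_const, integral_exp_shift μ t (t/2) t hμ.ne']
      _ ≤ (1/μ) * (2*c₂/t) := by
          have h2 : 0 < Real.exp (μ*(t/2-t)) := Real.exp_pos _
          have h3 : Real.exp (μ*(t-t)) - Real.exp (μ*(t/2-t)) ≤ 1 := by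
            simp only [sub_self, mul_zero, Real.exp_zero]; linarith
          gcongr
      _ = 2*c₂/(μ*t) := by field_simp
  -- combine
  have hb1' : (t/2 - 1) * (Real.exp (-(μ*t/2)) * c₂) ≤ 8*c₂/(μ^2*t) := by
    have hA : (t/2) * ((16/(μ^2*t^2)) * c₂) = 8*c₂/(μ^2*t) := by
      field_simp; ring
    rw [← hA]
    have hE : 0 < Real.exp (-(μ*t/2)) := Real.exp_pos _
    nlinarith [mul_le_mul_of_nonneg_left key1 (le_of_lt hc₂)]
  calc g t ≤ c₁ * Real.exp (-μ * t) + ∫ s in (1:ℝ)..t, f s := hT t htT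
    _ = c₁ * Real.exp (-μ * t) + ((∫ s in (1:ℝ)..(t/2), f s) + ∫ s in (t/2)..t, f s) := by
        rw [hsplit]
    _ ≤ c₁ * (1/(μ*t)) + (8*c₂/(μ^2*t) + 2*c₂/(μ*t)) :=
        add_le_add (mul_le_mul_of_nonneg_left key2 hc₁.le)
          (add_le_add (le_trans hb1 hb1') hb2)
    _ = (c₁/μ + 8*c₂/μ^2 + 2*c₂/μ)/t := by field_simp; ring
end

section
/- Let μ > 0 and λ ∈ (0,1), and suppose g : ℝ≥0 → ℝ≥0 satisfies g(t) ≤ ∫₀^{t^{1-λ}} c·e^{(μ/(1-λ))(s - t^{1-λ})} · s^{-λ/(1-λ)} ds for large t and some c > 0. Then g(t) = O(1/t^λ). -/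
/-!
Put `T = t^(1-λ)`, `ν = μ/(1-λ)`, `k = λ/(1-λ)`, so that `T^(-k) = t^(-λ)`, and split `[0, T]`
at `T/2`. On `[0, T/2]` the exponential factor is at most `e^(-νT/2)`, which absorbs the integral
`(T/2)^(1-k)/(1-k)` of the integrable singularity `s^(-k)` (this needs `k < 1`). On `[T/2, T]`
the power is at most `(T/2)^(-k)` and the exponential integrates to at most `1/ν`. Both pieces
are therefore `O((T/2)^(-k))`.
-/

open Real Filter Set intervalIntegral MeasureTheory

lemma integral_exp_mul_sub_le_inv {ν : ℝ} (hν : 0 < ν) (a b : ℝ) :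
    ∫ s in a..b, exp (ν * (s - b)) ≤ ν⁻¹ := by
  have hcomp : ∫ s in a..b, exp (ν * (s - b)) = ν⁻¹ * (1 - exp (ν * a - ν * b)) := by
    simp_rw [mul_sub]
    rw [integral_comp_mul_sub (fun x => exp x) hν.ne', integral_exp, sub_self, exp_zero,
      smul_eq_mul]
    ring
  rw [hcomp]
  exact mul_le_of_le_one_right (inv_pos.2 hν).le (sub_le_self _ (exp_pos _).le)

section PowerSingularity

variable {ν k T : ℝ}

lemma integral_zero_half_exp_mul_rpow_neg_le (hν : 0 < ν) (hk : k < 1) (hT : 0 < T) :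
    ∫ s in (0:ℝ)..T / 2, exp (ν * (s - T)) * s ^ (-k) ≤ (1 - k)⁻¹ / ν * (T / 2) ^ (-k) := by
  have hT2 : 0 < T / 2 := half_pos hT
  have hk' : -k + 1 ≠ 0 := by linarith
  have hk1 : 0 < 1 - k := by linarith
  -- `x ≤ exp x` at `x = ν T / 2`
  have hdecay : exp (-(ν * T / 2)) * (T / 2) ≤ ν⁻¹ := by
    rw [exp_neg, inv_mul_le_iff₀ (exp_pos _), ← div_eq_mul_inv, le_div_iff₀ hν]
    linarith [add_one_le_exp (ν * T / 2)]
  calc ∫ s in (0:ℝ)..T / 2, exp (ν * (s - T)) * s ^ (-k)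
      ≤ ∫ s in (0:ℝ)..T / 2, exp (-(ν * T / 2)) * s ^ (-k) := by
        refine integral_mono_on hT2.le ?_ ?_ fun s hs => ?_
        · exact (intervalIntegrable_rpow' (by linarith)).continuousOn_mul (by fun_prop)
        · exact (intervalIntegrable_rpow' (by linarith)).const_mul _
        · gcongr
          · exact rpow_nonneg hs.1 _
          · nlinarith [hs.2]
    _ = exp (-(ν * T / 2)) * (T / 2) * (T / 2) ^ (-k) / (1 - k) := by
        rw [intervalIntegral.integral_const_mul, integral_rpow (Or.inl (by linarith)),
          zero_rpow hk', rpow_add_one hT2.ne']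
        ring
    _ ≤ ν⁻¹ * (T / 2) ^ (-k) / (1 - k) := by gcongr
    _ = (1 - k)⁻¹ / ν * (T / 2) ^ (-k) := by ring

lemma integral_half_exp_mul_rpow_neg_le (hν : 0 < ν) (hk : 0 ≤ k) (hT : 0 < T) :
    ∫ s in T / 2..T, exp (ν * (s - T)) * s ^ (-k) ≤ ν⁻¹ * (T / 2) ^ (-k) := by
  have hT2 : 0 < T / 2 := half_pos hT
  calc ∫ s in T / 2..T, exp (ν * (s - T)) * s ^ (-k)
      ≤ ∫ s in T / 2..T, (T / 2) ^ (-k) * exp (ν * (s - T)) := by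
        refine integral_mono_on (by linarith) ?_ ?_ fun s hs => ?_
        · refine (intervalIntegrable_rpow (Or.inr ?_)).continuousOn_mul (by fun_prop)
          rw [uIcc_of_le (by linarith)]
          exact fun h => by linarith [h.1]
        · exact (continuous_exp.comp (by fun_prop)).intervalIntegrable _ _ |>.const_mul _
        · rw [mul_comm]
          exact mul_le_mul_of_nonneg_right (rpow_le_rpow_of_nonpos hT2 hs.1 (by linarith))
            (exp_pos _).le
    _ = (T / 2) ^ (-k) * ∫ s in T / 2..T, exp (ν * (s - T)) :=
        intervalIntegral.integral_const_mul _ _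
    _ ≤ ν⁻¹ * (T / 2) ^ (-k) := by
        rw [mul_comm]
        exact mul_le_mul_of_nonneg_right (integral_exp_mul_sub_le_inv hν _ _)
          (rpow_nonneg hT2.le _)

lemma integral_exp_mul_sub_mul_rpow_neg_le (hν : 0 < ν) (hk0 : 0 ≤ k) (hk1 : k < 1)
    (hT : 0 < T) :
    ∫ s in (0:ℝ)..T, exp (ν * (s - T)) * s ^ (-k) ≤ ((1 - k)⁻¹ + 1) / ν * (T / 2) ^ (-k) := by
  have hint : ∀ a b, IntervalIntegrable (fun s => exp (ν * (s - T)) * s ^ (-k)) volume a b :=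
    fun _ _ => (intervalIntegrable_rpow' (by linarith)).continuousOn_mul (by fun_prop)
  rw [← integral_add_adjacent_intervals (hint 0 (T / 2)) (hint (T / 2) T)]
  have h₁ := integral_zero_half_exp_mul_rpow_neg_le hν hk1 hT
  have h₂ := integral_half_exp_mul_rpow_neg_le hν hk0 hT
  calc _ ≤ (1 - k)⁻¹ / ν * (T / 2) ^ (-k) + ν⁻¹ * (T / 2) ^ (-k) := add_le_add h₁ h₂
    _ = ((1 - k)⁻¹ + 1) / ν * (T / 2) ^ (-k) := by ring

lemma not_intervalIntegrable_exp_mul_rpow_neg (hk : 1 ≤ k) (hT : 0 < T) :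
    ¬ IntervalIntegrable (fun s => exp (ν * (s - T)) * s ^ (-k)) volume 0 T := by
  intro h
  have hpow : IntervalIntegrable (fun s : ℝ => s ^ (-k)) volume 0 T := by
    convert h.continuousOn_mul (g := fun s => exp (-(ν * (s - T)))) (by fun_prop) using 1
    ext s
    rw [← mul_assoc, ← exp_add, neg_add_cancel, exp_zero, one_mul]
  rw [intervalIntegrable_iff_integrableOn_Ioo_of_le hT.le, integrableOn_Ioo_rpow_iff hT] at hpow
  linarith

end PowerSingularity

theorem change_of_variables_rate_general
    (μ lam : ℝ) (hμ : 0 < μ) (hlam : lam ∈ Set.Ioo (0:ℝ) 1)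
    (g : ℝ → ℝ)
    (c : ℝ) (hc : 0 < c)
    (hbound : ∀ᶠ t in atTop,
      g t ≤ ∫ s in (0:ℝ)..(t ^ (1 - lam)),
        c * Real.exp ((μ / (1 - lam)) * (s - t ^ (1 - lam))) *
          s ^ (-(lam / (1 - lam)))) :
    ∃ c' > (0:ℝ), ∃ τ > (0:ℝ), ∀ t ≥ τ, g t ≤ c' / t ^ lam := by
  suffices ∃ c' > (0:ℝ), ∀ᶠ t in atTop, g t ≤ c' / t ^ lam by
    obtain ⟨c', hc', hev⟩ := this
    obtain ⟨τ, hτ⟩ := (hev.and (eventually_gt_atTop 0)).exists_forall_of_atTop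
    exact ⟨c', hc', τ, (hτ τ le_rfl).2, fun t ht => (hτ t ht).1⟩
  obtain ⟨hlam0, hlam1⟩ := hlam
  set ν := μ / (1 - lam)
  set k := lam / (1 - lam)
  have hν : 0 < ν := div_pos hμ (by linarith)
  have hk : 0 < k := div_pos hlam0 (by linarith)
  have hk_mul : (1 - lam) * k = lam := mul_div_cancel₀ _ (by linarith)
  have hscale : ∀ t : ℝ, 0 < t → (t ^ (1 - lam) / 2) ^ (-k) = 2 ^ k / t ^ lam := fun t ht => by
    rw [div_rpow (by positivity) zero_le_two, ← rpow_mul ht.le, rpow_neg zero_le_two,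
      mul_neg, hk_mul, rpow_neg ht.le]
    field_simp
  simp_rw [mul_assoc c, intervalIntegral.integral_const_mul] at hbound
  rcases lt_or_ge k 1 with hk1 | hk1
  · refine ⟨c * (((1 - k)⁻¹ + 1) / ν * 2 ^ k), by positivity, ?_⟩
    filter_upwards [hbound, eventually_gt_atTop 0] with t hgt ht
    calc g t ≤ c * (((1 - k)⁻¹ + 1) / ν * (t ^ (1 - lam) / 2) ^ (-k)) := by
          refine hgt.trans (mul_le_mul_of_nonneg_left ?_ hc.le)
          exact integral_exp_mul_sub_mul_rpow_neg_le hν hk.le hk1 (by positivity)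
      _ = c * (((1 - k)⁻¹ + 1) / ν * 2 ^ k) / t ^ lam := by rw [hscale t ht]; ring
  · -- for `k ≥ 1` the integrand is not integrable at `0`, so the integral has the junk value `0`
    refine ⟨1, one_pos, ?_⟩
    filter_upwards [hbound, eventually_gt_atTop 0] with t hgt ht
    rw [integral_undef (not_intervalIntegrable_exp_mul_rpow_neg hk1 (by positivity)),
      mul_zero] at hgt
    exact hgt.trans (by positivity)

/-- Change-of-variables estimate: if
`g t ≤ ∫₀^{t^{1-λ}} c e^{(μ/(1-λ))(s - t^{1-λ})} s^{-λ/(1-λ)} ds` for large `t`,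
then `g(t) = O(1/t^λ)`. -/
theorem change_of_variables_rate
    (μ lam : ℝ) (hμ : 0 < μ) (hlam : lam ∈ Set.Ioo (0:ℝ) 1)
    (g : ℝ → ℝ) (hg : ∀ t ≥ (0:ℝ), 0 ≤ g t)
    (c : ℝ) (hc : 0 < c)
    (hbound : ∀ᶠ t in atTop,
      g t ≤ ∫ s in (0:ℝ)..(t ^ (1 - lam)),
        c * Real.exp ((μ / (1 - lam)) * (s - t ^ (1 - lam))) *
          s ^ (-(lam / (1 - lam)))) :
    ∃ c' > (0:ℝ), ∃ τ > (0:ℝ), ∀ t ≥ τ, g t ≤ c' / t ^ lam :=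
  change_of_variables_rate_general μ lam hμ hlam g c hc hbound
end

section
/- Let f : ℝ^m → ℝ be convex and differentiable, let ŷ be a global minimizer of f, and let x̄ : ℝ≥0 → ℝ^m be C¹ with d/dt ‖x̄(t) - ŷ‖² ≤ ω(t) for a function ω with ∫₀^∞ |ω(t)|dt < ∞. If there exists a sequence t_k → ∞ with x̄(t_k) → ŷ, then lim_{t→∞} x̄(t) = ŷ. -/
/-!
With `G s = ∫₀ˢ |ω|`, the bound on the derivative makes `‖x̄ s - ŷ‖² - G s` nonincreasing on
`[0, ∞)`. A nonincreasing function that converges along a sequence `t_k → ∞` converges, with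
the same limit; since `G` converges too, `‖x̄ s - ŷ‖²` tends to its limit along `t_k`, i.e. to `0`.
-/

open Filter MeasureTheory Set Topology

theorem AntitoneOn.tendsto_atTop_of_tendsto_comp {α β ι : Type*} [LinearOrder α]
    [LinearOrder β] [TopologicalSpace β] [OrderTopology β] {φ : α → β} {a : α}
    (hφ : AntitoneOn φ (Ici a)) {l : Filter ι} [l.NeBot] {t : ι → α} {L : β}
    (ht : Tendsto t l atTop) (hφt : Tendsto (φ ∘ t) l (𝓝 L)) :
    Tendsto φ atTop (𝓝 L) := by
  have hlower : ∀ s ≥ a, L ≤ φ s := fun s hs =>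
    le_of_tendsto hφt <| (ht.eventually_ge_atTop s).mono fun k hk =>
      hφ hs (le_trans hs hk) hk
  refine tendsto_order.2 ⟨fun u hu => ?_, fun u hu => ?_⟩
  · filter_upwards [eventually_ge_atTop a] with s hs using hu.trans_le (hlower s hs)
  · obtain ⟨k, hku, hka⟩ :=
      ((tendsto_order.1 hφt).2 u hu).and (ht.eventually_ge_atTop a) |>.exists
    filter_upwards [eventually_ge_atTop (t k)] with s hs
    exact (hφ hka (hka.trans hs) hs).trans_lt hku

theorem antitoneOn_sub_integral_of_hasDerivAt_le {g d w : ℝ → ℝ} {a : ℝ}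
    (hg : ∀ s ≥ a, HasDerivAt g (d s) s) (hdw : ∀ s ≥ a, d s ≤ w s)
    (hw : IntegrableOn w (Ici a)) :
    AntitoneOn (fun s => g s - ∫ u in a..s, w u) (Ici a) := by
  intro b hb c _ hbc
  have hwb : IntervalIntegrable w volume a b :=
    (hw.mono_set <| by rw [uIcc_of_le hb]; exact Icc_subset_Ici_self).intervalIntegrable
  have hwbc : IntegrableOn w (Icc b c) := hw.mono_set fun x hx => le_trans hb hx.1
  have hgbc : g c - g b ≤ ∫ u in b..c, w u :=
    intervalIntegral.sub_le_integral_of_hasDeriv_right_of_le hbc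
      (fun x hx => (hg x (hb.trans hx.1)).continuousAt.continuousWithinAt)
      (fun x hx => (hg x (hb.trans hx.1.le)).hasDerivWithinAt) hwbc
      (fun x hx => hdw x (hb.trans hx.1.le))
  dsimp only
  rw [← intervalIntegral.integral_add_adjacent_intervals hwb
    (by rwa [uIcc_of_le hbc] : IntegrableOn w (uIcc b c)).intervalIntegrable]
  linarith

theorem tendsto_atTop_of_hasDerivAt_le_integrable {g d w : ℝ → ℝ} {a L : ℝ}
    (hg : ∀ s ≥ a, HasDerivAt g (d s) s) (hdw : ∀ s ≥ a, d s ≤ w s)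
    (hw : IntegrableOn w (Ici a)) {ι : Type*} {l : Filter ι} [l.NeBot] {t : ι → ℝ}
    (ht : Tendsto t l atTop) (hgt : Tendsto (g ∘ t) l (𝓝 L)) :
    Tendsto g atTop (𝓝 L) := by
  set W := ∫ u in Ioi a, w u
  have hW : Tendsto (fun s => ∫ u in a..s, w u) atTop (𝓝 W) :=
    intervalIntegral_tendsto_integral_Ioi a (hw.mono_set Ioi_subset_Ici_self) tendsto_id
  have hφ : Tendsto (fun s => g s - ∫ u in a..s, w u) atTop (𝓝 (L - W)) :=
    (antitoneOn_sub_integral_of_hasDerivAt_le hg hdw hw).tendsto_atTop_of_tendsto_comp ht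
      (hgt.sub (hW.comp ht))
  simpa using hφ.add hW

theorem tendsto_of_tendsto_norm_sub_sq {ι E : Type*} [SeminormedAddCommGroup E] {l : Filter ι}
    {x : ι → E} {y : E} (h : Tendsto (fun i => ‖x i - y‖ ^ 2) l (𝓝 0)) :
    Tendsto x l (𝓝 y) := by
  rw [tendsto_iff_norm_sub_tendsto_zero]
  simpa [Real.sqrt_sq (norm_nonneg _)] using h.sqrt

theorem quasi_monotone_convergence_general
    (m : ℕ)
    (yhat : EuclideanSpace ℝ (Fin m))
    (xbar : ℝ → EuclideanSpace ℝ (Fin m))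
    (d ω : ℝ → ℝ)
    (hd : ∀ t ≥ (0:ℝ), HasDerivAt (fun s => ‖xbar s - yhat‖ ^ 2) (d t) t)
    (hdω : ∀ t ≥ (0:ℝ), d t ≤ ω t)
    (hωint : IntegrableOn (fun t => |ω t|) (Set.Ici (0:ℝ)))
    (t : ℕ → ℝ) (ht : Tendsto t atTop atTop)
    (hsub : Tendsto (fun k => xbar (t k)) atTop (nhds yhat)) :
    Tendsto xbar atTop (nhds yhat) := by
  have hsq : Tendsto (fun k => ‖xbar (t k) - yhat‖ ^ 2) atTop (𝓝 0) := by
    simpa using (tendsto_iff_norm_sub_tendsto_zero.1 hsub).pow 2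
  exact tendsto_of_tendsto_norm_sub_sq <| tendsto_atTop_of_hasDerivAt_le_integrable hd
    (fun s hs => (hdω s hs).trans (le_abs_self _)) hωint ht hsq

/-- Quasi-monotone convergence: if `d/dt ‖x̄(t) - ŷ‖²` is bounded by an
absolutely integrable perturbation `ω` and some sequence `x̄(t_k) → ŷ` with
`t_k → ∞`, then `x̄(t) → ŷ`. -/
theorem quasi_monotone_convergence
    (m : ℕ)
    (f : EuclideanSpace ℝ (Fin m) → ℝ)
    (hconv : ConvexOn ℝ Set.univ f)
    (hdiff : Differentiable ℝ f)
    (yhat : EuclideanSpace ℝ (Fin m))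
    (hmin : ∀ y, f yhat ≤ f y)
    (xbar : ℝ → EuclideanSpace ℝ (Fin m))
    (hC1 : ContDiff ℝ 1 xbar)
    (d ω : ℝ → ℝ)
    (hd : ∀ t ≥ (0:ℝ), HasDerivAt (fun s => ‖xbar s - yhat‖ ^ 2) (d t) t)
    (hdω : ∀ t ≥ (0:ℝ), d t ≤ ω t)
    (hωint : IntegrableOn (fun t => |ω t|) (Set.Ici (0:ℝ)))
    (t : ℕ → ℝ) (ht : Tendsto t atTop atTop)
    (hsub : Tendsto (fun k => xbar (t k)) atTop (nhds yhat)) :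
    Tendsto xbar atTop (nhds yhat) :=
  quasi_monotone_convergence_general m yhat xbar d ω hd hdω hωint t ht hsub
end
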